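/- arXiv:2104.13089 — 5 statements merged into one kernel-verified Lean document; each statement's English description precedes it below -/
import Mathlib

section
/- Let $n,r,k,t$ be positive integers with $n\ge r\ge t+1$ and $k\ge2$. Suppose $\mathcal{F}\subset\mathcal{L}_{n,r,k}$ is a maximal $t$-intersecting family with $t$-covering number $t+1$, and let $\mathcal{T}$ be the set of all $t$-covers of $\mathcal{F}$ of size $t+1$. Then $\mathcal{T}$ is a $t$-intersecting family, i.e., $|T\cap T'|\ge t$ for all $T,T'\in\mathcal{T}$. -/
open Finset

attribute [local instance] Classical.propDecidable

/-- The ground set `[n] × [k]`. -/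
def box (n k : ℕ) : Finset (ℕ × ℕ) := Finset.Icc 1 n ×ˢ Finset.Icc 1 k

/-- A `k`-signed set on `[n]`: a subset of `[n] × [k]` with pairwise distinct first coordinates. -/
def IsSigned (n k : ℕ) (T : Finset (ℕ × ℕ)) : Prop :=
  T ⊆ box n k ∧ (T.image Prod.fst).card = T.card

/-- `L n r k`: the collection of `k`-signed `r`-sets on `[n]`. -/
def L (n r k : ℕ) : Finset (Finset (ℕ × ℕ)) :=
  (box n k).powerset.filter (fun F => F.card = r ∧ (F.image Prod.fst).card = r)

/-- A family is `t`-intersecting if any two members meet in at least `t` elements. -/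
def IsTIntersecting (t : ℕ) (F : Finset (Finset (ℕ × ℕ))) : Prop :=
  ∀ A ∈ F, ∀ B ∈ F, t ≤ (A ∩ B).card

/-- `T` is a `t`-cover of the family `F`: a `k`-signed set meeting every member in ≥ `t` points. -/
def IsTCover (n k t : ℕ) (F : Finset (Finset (ℕ × ℕ))) (T : Finset (ℕ × ℕ)) : Prop :=
  IsSigned n k T ∧ ∀ A ∈ F, t ≤ (T ∩ A).card

/-- `F` is a maximal `t`-intersecting subfamily of `L n r k`. -/
def IsMaximalTIntersecting (n r k t : ℕ) (F : Finset (Finset (ℕ × ℕ))) : Prop :=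
  F ⊆ L n r k ∧ IsTIntersecting t F ∧
    ∀ G ⊆ L n r k, IsTIntersecting t G → F ⊆ G → G = F

/-- A `t`-intersecting family is trivial if all members contain a fixed `k`-signed `t`-set. -/
def IsTrivial (n k t : ℕ) (F : Finset (Finset (ℕ × ℕ))) : Prop :=
  ∃ T, IsSigned n k T ∧ T.card = t ∧ ∀ A ∈ F, T ⊆ A

/-- `Msig d = {(1,1),(2,1),…,(d,1)}`. -/
def Msig (d : ℕ) : Finset (ℕ × ℕ) := (Finset.Icc 1 d).image (fun x => (x, 1))

/-- The family `H₁(n,r,k,ℓ,t)`. -/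
def H1 (n r k l t : ℕ) : Finset (Finset (ℕ × ℕ)) :=
  (L n r k).filter (fun F =>
    (Msig t ⊆ F ∧ t + 1 ≤ (F ∩ Msig l).card) ∨
    (¬ Msig t ⊆ F ∧ (F ∩ Msig l).card = l - 1))

/-- The family `H₂(n,r,k,c,t)`. -/
def H2 (n r k c t : ℕ) : Finset (Finset (ℕ × ℕ)) :=
  (L n r k).filter (fun F =>
    (Msig t ⊆ F ∧ t + 1 ≤ (F ∩ Msig r).card) ∨
    (F ∩ Msig r = Msig t ∧ Msig c \ Msig r ⊆ F) ∨
    (¬ Msig t ⊆ F ∧ (F ∩ Msig r).card = r - 1 ∧ (F ∩ (Msig c \ Msig r)).card = 1))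

/-- The set of all `t`-covers of `F` of size `t+1`. -/
noncomputable def TauSet (n k t : ℕ) (F : Finset (Finset (ℕ × ℕ))) : Finset (Finset (ℕ × ℕ)) :=
  (box n k).powerset.filter (fun T => IsTCover n k t F T ∧ T.card = t + 1)
theorem covers_are_t_intersecting (n r k t : ℕ) (hn : 0 < n) (ht : 0 < t)
    (hk : 2 ≤ k) (htr : t + 1 ≤ r) (hrn : r ≤ n)
    (F : Finset (Finset (ℕ × ℕ))) (hF : IsMaximalTIntersecting n r k t F)
    (hex : ∃ T, IsTCover n k t F T ∧ T.card = t + 1)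
    (hmin : ∀ T, IsTCover n k t F T → t + 1 ≤ T.card)
    (T T' : Finset (ℕ × ℕ))
    (hT : IsTCover n k t F T) (hTc : T.card = t + 1)
    (hT' : IsTCover n k t F T') (hT'c : T'.card = t + 1) :
    t ≤ (T ∩ T').card := by
  classical
  obtain ⟨⟨hTbox, hTfst⟩, hTcov⟩ := hT
  obtain ⟨⟨hT'box, hT'fst⟩, hT'cov⟩ := hT'
  have hinjT' : Set.InjOn Prod.fst (T' : Set (ℕ × ℕ)) := Finset.card_image_iff.mp hT'fst
  -- for any x, a sign y with (x,y) ∉ T'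
  have hsign : ∀ x : ℕ, ∃ y, y ∈ Finset.Icc 1 k ∧ (x, y) ∉ T' := by
    intro x
    by_contra h
    push_neg at h
    have h1 : (x, 1) ∈ T' := h 1 (by simp [Finset.mem_Icc]; omega)
    have h2 : (x, 2) ∈ T' := h 2 (by simp [Finset.mem_Icc]; omega)
    have := hinjT' (Finset.mem_coe.mpr h1) (Finset.mem_coe.mpr h2) rfl
    simp at this
  set g : ℕ → ℕ × ℕ := fun x => (x, (hsign x).choose) with hg
  have hgk : ∀ x, (hsign x).choose ∈ Finset.Icc 1 k := fun x => (hsign x).choose_spec.1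
  have hgT' : ∀ x, g x ∉ T' := fun x => (hsign x).choose_spec.2
  have hfstsub : T.image Prod.fst ⊆ Finset.Icc 1 n := by
    intro x hx
    obtain ⟨p, hp, rfl⟩ := Finset.mem_image.mp hx
    exact (Finset.mem_product.mp (hTbox hp)).1
  have hcardfst : (T.image Prod.fst).card = t + 1 := by rw [hTfst, hTc]
  have hcardsdiff : (Finset.Icc 1 n \ T.image Prod.fst).card = n - (t + 1) := by
    rw [Finset.card_sdiff_of_subset hfstsub, hcardfst, Nat.card_Icc]; omega
  obtain ⟨X, hXsub, hXcard⟩ := Finset.exists_subset_card_eq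
    (show r - (t + 1) ≤ (Finset.Icc 1 n \ T.image Prod.fst).card by omega)
  have hXnotin : ∀ x ∈ X, x ∉ T.image Prod.fst := fun x hx =>
    (Finset.mem_sdiff.mp (hXsub hx)).2
  have hXIcc : ∀ x ∈ X, x ∈ Finset.Icc 1 n := fun x hx =>
    (Finset.mem_sdiff.mp (hXsub hx)).1
  set A : Finset (ℕ × ℕ) := T ∪ X.image g with hA
  have hdisj : Disjoint T (X.image g) := by
    rw [Finset.disjoint_left]
    intro p hpT hpX
    obtain ⟨x, hx, rfl⟩ := Finset.mem_image.mp hpX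
    exact hXnotin x hx (Finset.mem_image.mpr ⟨g x, hpT, rfl⟩)
  have hginj : Set.InjOn g (X : Set ℕ) := by
    intro a _ b _ hab
    exact congrArg Prod.fst hab
  have hXimg : (X.image g).card = r - (t + 1) := by
    rw [Finset.card_image_of_injOn hginj, hXcard]
  have hAcard : A.card = r := by
    rw [hA, Finset.card_union_of_disjoint hdisj, hTc, hXimg]
    omega
  have hAfstimg : A.image Prod.fst = T.image Prod.fst ∪ X := by
    rw [hA, Finset.image_union, Finset.image_image]
    congr 1
    have : (Prod.fst ∘ g) = id := by funext x; rfl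
    rw [this, Finset.image_id]
  have hAfst : (A.image Prod.fst).card = r := by
    rw [hAfstimg, Finset.card_union_of_disjoint, hcardfst, hXcard]
    · omega
    · rw [Finset.disjoint_left]; intro x hx hx'
      exact hXnotin x hx' hx
  have hAbox : A ⊆ box n k := by
    rw [hA]
    apply Finset.union_subset hTbox
    intro p hp
    obtain ⟨x, hx, rfl⟩ := Finset.mem_image.mp hp
    exact Finset.mem_product.mpr ⟨hXIcc x hx, hgk x⟩
  have hAL : A ∈ L n r k := by
    rw [L, Finset.mem_filter, Finset.mem_powerset]
    exact ⟨hAbox, hAcard, hAfst⟩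
  -- A ∩ T' ⊆ T
  have hAT' : A ∩ T' ⊆ T := by
    intro p hp
    obtain ⟨hpA, hpT'⟩ := Finset.mem_inter.mp hp
    rcases Finset.mem_union.mp hpA with h | h
    · exact h
    · obtain ⟨x, hx, rfl⟩ := Finset.mem_image.mp h
      exact absurd hpT' (hgT' x)
  -- A belongs to F by maximality
  have hAF : A ∈ F := by
    obtain ⟨hFL, hFint, hmax⟩ := hF
    have hGsub : insert A F ⊆ L n r k := by
      intro B hB
      rcases Finset.mem_insert.mp hB with rfl | hB
      · exact hAL
      · exact hFL hB
    have hGint : IsTIntersecting t (insert A F) := by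
      intro B hB C hC
      have key : ∀ C ∈ F, t ≤ (A ∩ C).card := by
        intro C hC
        calc t ≤ (T ∩ C).card := hTcov C hC
          _ ≤ (A ∩ C).card := Finset.card_le_card
              (Finset.inter_subset_inter Finset.subset_union_left (le_refl C))
      rcases Finset.mem_insert.mp hB with rfl | hB <;>
        rcases Finset.mem_insert.mp hC with rfl | hC
      · rw [Finset.inter_self, hAcard]; omega
      · exact key C hC
      · rw [Finset.inter_comm]; exact key B hB
      · exact hFint B hB C hC
    have := hmax (insert A F) hGsub hGint (Finset.subset_insert A F)
    rw [← this]
    exact Finset.mem_insert_self A F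
  have hcov := hT'cov A hAF
  have heq : T' ∩ A = T' ∩ T := by
    apply Finset.Subset.antisymm
    · intro p hp
      obtain ⟨h1, h2⟩ := Finset.mem_inter.mp hp
      exact Finset.mem_inter.mpr ⟨h1, hAT' (Finset.mem_inter.mpr ⟨h2, h1⟩)⟩
    · exact Finset.inter_subset_inter (le_refl T')
        (hA ▸ Finset.subset_union_left)
  rw [heq, Finset.inter_comm] at hcov
  exact hcov
end

section
/- Let $n,r,k,t$ be positive integers with $n\ge r\ge t+1$ and $k\ge2$. Suppose $\mathcal{F}\subset\mathcal{L}_{n,r,k}$ is a maximal $t$-intersecting family with $\tau_t(\mathcal{F})=t+1$. Let $\mathcal{T}$ be the set of all $t$-covers of $\mathcal{F}$ of size $t+1$, and suppose $\tau_t(\mathcal{T})=t+1$. Then $M=\bigcup_{T\in\mathcal{T}}T$ is a $k$-signed $(t+2)$-set on $[n]$, and every $F\in\mathcal{F}$ satisfies $|F\cap M|\ge t+1$. -/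
open Finset

attribute [local instance] Classical.propDecidable

/-!
Take `T₁ ∈ 𝒯`. Any two `t`-covers of size `≤ r` meet in `≥ t` points, since the smaller one
extends to an `r`-set that meets the other only inside it and lies in `F` by maximality. As
`τ_t(𝒯) = t + 1`, a `t`-subset of `T₁` is not a `t`-cover of `𝒯`, which yields `T₂ ∈ 𝒯` with
`|T₁ ∩ T₂| = t`, and then `T₁ ∩ T₂` is not one either, which yields `T₃ ∈ 𝒯` with
`|T₁ ∩ T₂ ∩ T₃| < t`. Counting forces `T₁ △ T₂ ⊆ T₃ ⊆ T₁ ∪ T₂`, so `T₁ ∪ T₂` is a signed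
`(t + 2)`-set, and a set meeting each of `T₁, T₂, T₃` in `t` points meets `T₁ ∪ T₂` in `t + 1`.
Applied to the members of `𝒯` this gives `M = T₁ ∪ T₂`, applied to those of `F` the bound.
-/

section FinsetLemmas

variable {α : Type*} [DecidableEq α] {t : ℕ} {s u T₁ T₂ T₃ X : Finset α}

lemma subset_of_card_le_card_inter (h : s.card ≤ (s ∩ u).card) : s ⊆ u :=
  inter_eq_left.mp (eq_of_subset_of_card_le inter_subset_left h)

-- `s \ u` has at most one point, and some point of `X ∩ s` lies outside `u`.
lemma sdiff_subset_of_card_inter_lt (hs : s.card ≤ t + 1) (hsu : t ≤ (s ∩ u).card)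
    (h : (s ∩ u ∩ X).card < t) (hX : t ≤ (X ∩ s).card) : s \ u ⊆ X := by
  have hsu' : (s \ u).card ≤ 1 := by rw [card_sdiff, inter_comm]; omega
  obtain ⟨x, hxXs, hx⟩ := exists_mem_notMem_of_card_lt_card (h.trans_le hX)
  have hxu : x ∉ u := fun hxu => hx (by simp_all)
  have hx' : x ∈ s \ u := mem_sdiff.mpr ⟨(mem_inter.mp hxXs).2, hxu⟩
  intro y hy
  rw [card_le_one.mp hsu' y hy x hx']
  exact (mem_inter.mp hxXs).1

-- Inclusion–exclusion: `|T₃ ∩ (T₁ ∪ T₂)| ≥ t + t - (t - 1) = t + 1 ≥ |T₃|`.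
lemma subset_union_of_card_inter_lt (h₃ : T₃.card ≤ t + 1) (h₃₁ : t ≤ (T₃ ∩ T₁).card)
    (h₃₂ : t ≤ (T₃ ∩ T₂).card) (h : (T₁ ∩ T₂ ∩ T₃).card < t) : T₃ ⊆ T₁ ∪ T₂ := by
  have hii : T₃ ∩ T₁ ∩ (T₃ ∩ T₂) = T₁ ∩ T₂ ∩ T₃ := by
    ext; simp only [mem_inter]; tauto
  have hie := card_union_add_card_inter (T₃ ∩ T₁) (T₃ ∩ T₂)
  rw [hii, ← inter_union_distrib_left] at hie
  exact subset_of_card_le_card_inter (by omega)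

-- If `|X ∩ (T₁ ∪ T₂)| ≤ t`, it equals each `X ∩ Tᵢ`, hence lies in `T₁ ∩ T₂ ∩ T₃`.
lemma lt_card_inter_union (h₃ : T₃ ⊆ T₁ ∪ T₂) (h : (T₁ ∩ T₂ ∩ T₃).card < t)
    (hX₁ : t ≤ (X ∩ T₁).card) (hX₂ : t ≤ (X ∩ T₂).card) (hX₃ : t ≤ (X ∩ T₃).card) :
    t < (X ∩ (T₁ ∪ T₂)).card := by
  by_contra! hle
  have eq_of_subset {T : Finset α} (hT : T ⊆ T₁ ∪ T₂) (hXT : t ≤ (X ∩ T).card) :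
      X ∩ T = X ∩ (T₁ ∪ T₂) :=
    eq_of_subset_of_card_le (inter_subset_inter_left hT) (hle.trans hXT)
  have e₁ := eq_of_subset subset_union_left hX₁
  have e₂ := eq_of_subset subset_union_right hX₂
  have e₃ := eq_of_subset h₃ hX₃
  have hsub : X ∩ (T₁ ∪ T₂) ⊆ T₁ ∩ T₂ ∩ T₃ := by
    intro p hp
    have hp₁ : p ∈ X ∩ T₁ := e₁ ▸ hp
    have hp₂ : p ∈ X ∩ T₂ := e₂ ▸ hp
    have hp₃ : p ∈ X ∩ T₃ := e₃ ▸ hp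
    exact mem_inter.mpr ⟨mem_inter.mpr ⟨(mem_inter.mp hp₁).2, (mem_inter.mp hp₂).2⟩,
      (mem_inter.mp hp₃).2⟩
  have := card_le_card hsub
  rw [e₁] at hX₁
  omega

end FinsetLemmas

section Signed

variable {n r k t : ℕ}

lemma isSigned_iff {T : Finset (ℕ × ℕ)} :
    IsSigned n k T ↔ T ⊆ box n k ∧ Set.InjOn Prod.fst (T : Set (ℕ × ℕ)) := by
  rw [IsSigned, card_image_iff]

lemma IsSigned.subset {T S : Finset (ℕ × ℕ)} (hT : IsSigned n k T) (hS : S ⊆ T) :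
    IsSigned n k S := by
  rw [isSigned_iff] at hT ⊢
  exact ⟨hS.trans hT.1, hT.2.mono (coe_subset.mpr hS)⟩

-- Two points of `T₁ ∪ T₂` lie together in `T₁`, in `T₂` or in `T₃`.
lemma IsSigned.union {T₁ T₂ T₃ : Finset (ℕ × ℕ)} (h₁ : IsSigned n k T₁)
    (h₂ : IsSigned n k T₂) (h₃ : IsSigned n k T₃) (hd₁ : T₁ \ T₂ ⊆ T₃) (hd₂ : T₂ \ T₁ ⊆ T₃) :
    IsSigned n k (T₁ ∪ T₂) := by
  rw [isSigned_iff] at h₁ h₂ h₃ ⊢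
  refine ⟨union_subset h₁.1 h₂.1, fun p hp q hq hpq => ?_⟩
  have hd₁ : ∀ x ∈ T₁, x ∉ T₂ → x ∈ T₃ := fun x h h' => hd₁ (mem_sdiff.mpr ⟨h, h'⟩)
  have hd₂ : ∀ x ∈ T₂, x ∉ T₁ → x ∈ T₃ := fun x h h' => hd₂ (mem_sdiff.mpr ⟨h, h'⟩)
  simp only [coe_union, Set.mem_union, mem_coe] at hp hq
  have : (p ∈ T₁ ∧ q ∈ T₁) ∨ (p ∈ T₂ ∧ q ∈ T₂) ∨ (p ∈ T₃ ∧ q ∈ T₃) := by tauto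
  rcases this with ⟨hp, hq⟩ | ⟨hp, hq⟩ | ⟨hp, hq⟩
  · exact h₁.2 hp hq hpq
  · exact h₂.2 hp hq hpq
  · exact h₃.2 hp hq hpq

lemma mem_L_iff {A : Finset (ℕ × ℕ)} :
    A ∈ L n r k ↔ A ⊆ box n k ∧ A.card = r ∧ (A.image Prod.fst).card = r := by
  simp [L]

-- On each new coordinate `x` take the sign `1`, or `2` if `(x, 1) ∈ T₁`.
lemma exists_mem_L_superset_inter_subset (hk : 2 ≤ k) (hrn : r ≤ n)
    {T₁ T₂ : Finset (ℕ × ℕ)} (h₁ : IsSigned n k T₁) (h₂ : IsSigned n k T₂) (hc₂ : T₂.card ≤ r) :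
    ∃ A ∈ L n r k, T₂ ⊆ A ∧ A ∩ T₁ ⊆ T₂ := by
  set P := T₂.image Prod.fst
  have hPsub : P ⊆ Icc 1 n := by
    intro x hx
    obtain ⟨p, hp, rfl⟩ := mem_image.mp hx
    exact (mem_product.mp (h₂.1 hp)).1
  have hPcard : P.card = T₂.card := h₂.2
  obtain ⟨X, hXsub, hXcard⟩ := exists_subset_card_eq (s := Icc 1 n \ P) (n := r - T₂.card)
    (by rw [card_sdiff_of_subset hPsub, hPcard, Nat.card_Icc]; omega)
  let f : ℕ → ℕ × ℕ := fun x => (x, if (x, 1) ∈ T₁ then 2 else 1)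
  have hfst : (X.image f).image Prod.fst = X := by simp [image_image, Function.comp_def, f]
  have hPX : Disjoint P X := disjoint_left.mpr fun x hx hx' => (mem_sdiff.mp (hXsub hx')).2 hx
  set A := T₂ ∪ X.image f
  have hAfst : (A.image Prod.fst).card = r := by
    rw [image_union, hfst, card_union_of_disjoint hPX, hPcard, hXcard]; omega
  have hAcard : A.card = r := by
    refine le_antisymm ?_ (hAfst ▸ card_image_le)
    calc A.card ≤ T₂.card + (X.image f).card := card_union_le _ _
      _ ≤ T₂.card + X.card := by gcongr; exact card_image_le
      _ = r := by omega
  have hAbox : A ⊆ box n k := by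
    refine union_subset h₂.1 fun p hp => ?_
    obtain ⟨x, hx, rfl⟩ := mem_image.mp hp
    have hxn : x ∈ Icc 1 n := (mem_sdiff.mp (hXsub hx)).1
    refine mem_product.mpr ⟨hxn, mem_Icc.mpr ?_⟩
    simp only [f]
    split_ifs <;> omega
  refine ⟨A, mem_L_iff.mpr ⟨hAbox, hAcard, hAfst⟩, subset_union_left, fun p hp => ?_⟩
  obtain ⟨hpA, hpT₁⟩ := mem_inter.mp hp
  refine (mem_union.mp hpA).resolve_right fun hpX => ?_
  obtain ⟨x, -, rfl⟩ := mem_image.mp hpX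
  by_cases hx₁ : (x, 1) ∈ T₁
  · have hx₂ : (x, 2) ∈ T₁ := by simpa [f, hx₁] using hpT₁
    exact absurd ((isSigned_iff.mp h₁).2 hx₁ hx₂ rfl) (by simp)
  · simp [f, hx₁] at hpT₁

lemma IsMaximalTIntersecting.mem_of_le_card_inter {F : Finset (Finset (ℕ × ℕ))}
    (hF : IsMaximalTIntersecting n r k t F) (htr : t ≤ r)
    {A : Finset (ℕ × ℕ)} (hA : A ∈ L n r k) (hAF : ∀ B ∈ F, t ≤ (A ∩ B).card) : A ∈ F := by
  have hsubL : insert A F ⊆ L n r k := insert_subset hA hF.1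
  have hint : IsTIntersecting t (insert A F) := by
    intro X hX Y hY
    rcases mem_insert.mp hX with rfl | hXF
    · rcases mem_insert.mp hY with rfl | hYF
      · rwa [inter_self, (mem_L_iff.mp hA).2.1]
      · exact hAF Y hYF
    · rcases mem_insert.mp hY with rfl | hYF
      · rw [inter_comm]; exact hAF X hXF
      · exact hF.2.1 X hXF Y hYF
  rw [← hF.2.2 _ hsubL hint (subset_insert A F)]
  exact mem_insert_self A F

lemma IsMaximalTIntersecting.le_card_inter_of_isTCover (hk : 2 ≤ k)
    (htr : t ≤ r) (hrn : r ≤ n) {F : Finset (Finset (ℕ × ℕ))}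
    (hF : IsMaximalTIntersecting n r k t F) {T₁ T₂ : Finset (ℕ × ℕ)}
    (h₁ : IsTCover n k t F T₁) (h₂ : IsTCover n k t F T₂) (hc₂ : T₂.card ≤ r) :
    t ≤ (T₁ ∩ T₂).card := by
  obtain ⟨A, hAL, hTA, hAT⟩ := exists_mem_L_superset_inter_subset hk hrn h₁.1 h₂.1 hc₂
  have hAF : A ∈ F := hF.mem_of_le_card_inter htr hAL fun B hB =>
    (h₂.2 B hB).trans (card_le_card (inter_subset_inter_right hTA))
  calc t ≤ (T₁ ∩ A).card := h₁.2 A hAF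
    _ ≤ (T₁ ∩ T₂).card := card_le_card fun p hp =>
        mem_inter.mpr ⟨(mem_inter.mp hp).1, hAT (by rw [inter_comm]; exact hp)⟩

lemma mem_TauSet {F : Finset (Finset (ℕ × ℕ))} {T : Finset (ℕ × ℕ)} :
    T ∈ TauSet n k t F ↔ IsTCover n k t F T ∧ T.card = t + 1 := by
  rw [TauSet, mem_filter, mem_powerset, and_iff_right_iff_imp]
  exact fun h => h.1.1.1

lemma exists_card_inter_lt_of_card_le {G : Finset (Finset (ℕ × ℕ))}
    (hG : ∀ S, IsTCover n k t G S → t + 1 ≤ S.card) {S : Finset (ℕ × ℕ)}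
    (hS : IsSigned n k S) (hcard : S.card ≤ t) : ∃ T ∈ G, (S ∩ T).card < t := by
  by_contra! h
  exact absurd (hG S ⟨hS, h⟩) (by omega)

lemma exists_card_inter_eq_and_card_inter_lt {G : Finset (Finset (ℕ × ℕ))}
    (hG : ∀ S, IsTCover n k t G S → t + 1 ≤ S.card) {T₁ : Finset (ℕ × ℕ)}
    (hT₁ : IsSigned n k T₁) (hT₁card : T₁.card = t + 1) (hmeet : ∀ T ∈ G, t ≤ (T₁ ∩ T).card) :
    ∃ T₂ ∈ G, ∃ T₃ ∈ G, (T₁ ∩ T₂).card = t ∧ (T₁ ∩ T₂ ∩ T₃).card < t := by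
  obtain ⟨S, hST₁, hS⟩ := exists_subset_card_eq (show t ≤ T₁.card by omega)
  obtain ⟨T₂, hT₂, hST₂⟩ := exists_card_inter_lt_of_card_le hG (hT₁.subset hST₁) hS.le
  have h₁₂ : (T₁ ∩ T₂).card = t := by
    refine le_antisymm (not_lt.mp fun hlt => ?_) (hmeet T₂ hT₂)
    have hT₁₂ : T₁ ⊆ T₂ := subset_of_card_le_card_inter (hT₁card ▸ hlt)
    rw [inter_eq_left.mpr (hST₁.trans hT₁₂)] at hST₂
    omega
  obtain ⟨T₃, hT₃, h₁₂₃⟩ :=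
    exists_card_inter_lt_of_card_le hG (hT₁.subset inter_subset_left) h₁₂.le
  exact ⟨T₂, hT₂, T₃, hT₃, h₁₂, h₁₂₃⟩

end Signed

theorem union_of_covers_case1_general (n r k t : ℕ)
    (hk : 2 ≤ k) (htr : t + 1 ≤ r) (hrn : r ≤ n)
    (F : Finset (Finset (ℕ × ℕ))) (hF : IsMaximalTIntersecting n r k t F)
    (hex : ∃ T, IsTCover n k t F T ∧ T.card = t + 1)
    (hTau : ∀ S, IsTCover n k t (TauSet n k t F) S → t + 1 ≤ S.card) :
    IsSigned n k ((TauSet n k t F).sup id) ∧ ((TauSet n k t F).sup id).card = t + 2 ∧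
      ∀ A ∈ F, t + 1 ≤ (A ∩ (TauSet n k t F).sup id).card := by
  have hcov {T T' : Finset (ℕ × ℕ)} (hT : IsTCover n k t F T) (hT' : T' ∈ TauSet n k t F) :
      t ≤ (T ∩ T').card :=
    hF.le_card_inter_of_isTCover hk (by omega) hrn hT (mem_TauSet.mp hT').1
      ((mem_TauSet.mp hT').2 ▸ htr)
  obtain ⟨T₁, hT₁cov, hT₁card⟩ := hex
  have hT₁ : T₁ ∈ TauSet n k t F := mem_TauSet.mpr ⟨hT₁cov, hT₁card⟩
  obtain ⟨T₂, hT₂, T₃, hT₃, h₁₂, h₁₂₃⟩ :=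
    exists_card_inter_eq_and_card_inter_lt hTau hT₁cov.1 hT₁card fun T => hcov hT₁cov
  obtain ⟨⟨hT₂cov, hT₂card⟩, hT₃cov, hT₃card⟩ := And.intro (mem_TauSet.mp hT₂) (mem_TauSet.mp hT₃)
  have hT₃sub : T₃ ⊆ T₁ ∪ T₂ :=
    subset_union_of_card_inter_lt hT₃card.le (hcov hT₃cov hT₁) (hcov hT₃cov hT₂) h₁₂₃
  have hmeet {X : Finset (ℕ × ℕ)} (h : ∀ T ∈ TauSet n k t F, t ≤ (X ∩ T).card) :
      t < (X ∩ (T₁ ∪ T₂)).card := lt_card_inter_union hT₃sub h₁₂₃ (h _ hT₁) (h _ hT₂) (h _ hT₃)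
  have hsup : (TauSet n k t F).sup id = T₁ ∪ T₂ := by
    refine le_antisymm (Finset.sup_le fun T hT => ?_)
      (union_subset (le_sup (f := id) hT₁) (le_sup (f := id) hT₂))
    obtain ⟨hTcov, hTcard⟩ := mem_TauSet.mp hT
    exact subset_of_card_le_card_inter (hTcard ▸ hmeet fun T' => hcov hTcov)
  have hd₁₂ : T₁ \ T₂ ⊆ T₃ :=
    sdiff_subset_of_card_inter_lt hT₁card.le h₁₂.ge h₁₂₃ (hcov hT₃cov hT₁)
  have hd₂₁ : T₂ \ T₁ ⊆ T₃ := sdiff_subset_of_card_inter_lt hT₂card.le (inter_comm T₁ T₂ ▸ h₁₂.ge)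
    (inter_comm T₁ T₂ ▸ h₁₂₃) (hcov hT₃cov hT₂)
  rw [hsup]
  refine ⟨hT₁cov.1.union hT₂cov.1 hT₃cov.1 hd₁₂ hd₂₁, ?_, fun A hA => hmeet fun T hT => ?_⟩
  · have := card_union_add_card_inter T₁ T₂
    omega
  · exact inter_comm T A ▸ (mem_TauSet.mp hT).1.2 A hA

theorem union_of_covers_case1 (n r k t : ℕ) (hn : 0 < n) (ht : 0 < t)
    (hk : 2 ≤ k) (htr : t + 1 ≤ r) (hrn : r ≤ n)
    (F : Finset (Finset (ℕ × ℕ))) (hF : IsMaximalTIntersecting n r k t F)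
    (hex : ∃ T, IsTCover n k t F T ∧ T.card = t + 1)
    (hmin : ∀ T, IsTCover n k t F T → t + 1 ≤ T.card)
    (hTau : ∀ S, IsTCover n k t (TauSet n k t F) S → t + 1 ≤ S.card) :
    IsSigned n k ((TauSet n k t F).sup id) ∧ ((TauSet n k t F).sup id).card = t + 2 ∧
      ∀ A ∈ F, t + 1 ≤ (A ∩ (TauSet n k t F).sup id).card :=
  union_of_covers_case1_general n r k t hk htr hrn F hF hex hTau
end

section
/- Let $n,r,k,t$ be positive integers with $k\ge2$, $t+1\le r\le n$, and let $t+2\le\ell\le\min\{r+1,n\}$. Then the family $\mathcal{H}_1(n,r,k,\ell,t)$ is $t$-intersecting: any two of its members intersect in at least $t$ elements. -/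
open Finset

attribute [local instance] Classical.propDecidable

lemma Msig_card' (d : ℕ) : (Msig d).card = d := by
  rw [Msig, Finset.card_image_of_injective _ (fun a b h => by simpa using h)]
  simp

theorem H1_t_intersecting (n r k t l : ℕ) (hn : 0 < n) (ht : 0 < t)
    (hk : 2 ≤ k) (htr : t + 1 ≤ r) (hrn : r ≤ n)
    (hl1 : t + 2 ≤ l) (hl2 : l ≤ min (r + 1) n) :
    IsTIntersecting t (H1 n r k l t) := by
  intro A hA B hB
  simp only [H1, mem_filter] at hA hB
  obtain ⟨hAL, hA'⟩ := hA
  obtain ⟨hBL, hB'⟩ := hB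
  rcases hA' with ⟨hAt, hAl⟩ | ⟨hAt, hAl⟩ <;> rcases hB' with ⟨hBt, hBl⟩ | ⟨hBt, hBl⟩
  · calc t = (Msig t).card := (Msig_card' t).symm
      _ ≤ (A ∩ B).card := card_le_card (subset_inter hAt hBt)
  all_goals
    have h2 := card_union_add_card_inter (A ∩ Msig l) (B ∩ Msig l)
    have h3 : ((A ∩ Msig l) ∪ (B ∩ Msig l)).card ≤ l := by
      calc ((A ∩ Msig l) ∪ (B ∩ Msig l)).card
          ≤ (Msig l).card := card_le_card (union_subset inter_subset_right inter_subset_right)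
        _ = l := Msig_card' l
    have h4 : (A ∩ Msig l) ∩ (B ∩ Msig l) ⊆ A ∩ B := by
      intro x hx
      simp only [mem_inter] at hx ⊢
      tauto
    have h5 := card_le_card h4
    omega
end

section
/- Let $n,r,k,t,a$ be positive integers with $k\ge2$, $t+1\le r\le n$ and $t+1\le a\le n$. For $b\in\{t+1,\dots,a\}$ let $\mathcal{N}_b$ denote the set of $F\in\mathcal{L}_{n,r,k}$ with $M_t\subseteq F$ and $|F\cap M_a|=b$. Then $\sum_{i=1}^{a-t} i\,|\mathcal{N}_{t+i}| = (a-t)\binom{n-t-1}{r-t-1}k^{r-t-1}$. -/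
open Finset

attribute [local instance] Classical.propDecidable

/-! Double count the pairs `(p, F)` with `F ∈ L n r k`, `Msig t ⊆ F` and
`p ∈ F ∩ (Msig a \ Msig t)`. A set `F` with `#(F ∩ Msig a) = t + i` lies in `i` such pairs,
which gives the left side. Each of the `a - t` points `p` lies in exactly the `F` containing the
signed `(t + 1)`-set `insert p (Msig t)`; removing it leaves an arbitrary signed `(r - t - 1)`-set
on the `n - t - 1` unused first coordinates, so there are
`(n - t - 1).choose (r - t - 1) * k ^ (r - t - 1)` of them. -/

theorem sum_mul_card_filter_eq_sum {ι : Type*} {s : Finset ι} {g : ι → ℕ} {m : ℕ}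
    (h : ∀ x ∈ s, g x ≤ m) :
    ∑ i ∈ Icc 1 m, i * #{x ∈ s | g x = i} = ∑ x ∈ s, g x := by
  rw [← sum_fiberwise_of_maps_to (t := Icc 0 m) (fun x hx => mem_Icc.2 ⟨Nat.zero_le _, h x hx⟩),
    ← insert_Icc_add_one_left_eq_Icc (Nat.zero_le m), sum_insert (by simp), zero_add,
    sum_eq_zero fun x hx => (mem_filter.1 hx).2, zero_add]
  refine sum_congr rfl fun i _ => ?_
  rw [sum_congr rfl fun x hx => (mem_filter.1 hx).2, sum_const, smul_eq_mul, mul_comm]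

section SignedSets

variable {α β : Type*} [DecidableEq α]

def signedSets (A : Finset α) (B : Finset β) (r : ℕ) : Finset (Finset (α × β)) :=
  {G ∈ (A ×ˢ B).powerset | G.card = r ∧ (G.image Prod.fst).card = r}

theorem mem_signedSets {A : Finset α} {B : Finset β} {r : ℕ} {G : Finset (α × β)} :
    G ∈ signedSets A B r ↔ G ⊆ A ×ˢ B ∧ G.card = r ∧ Set.InjOn Prod.fst (G : Set (α × β)) := by
  rw [signedSets, mem_filter, mem_powerset, ← card_image_iff]
  constructor
  · rintro ⟨hG, hcard, himage⟩
    exact ⟨hG, hcard, himage.trans hcard.symm⟩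
  · rintro ⟨hG, hcard, himage⟩
    exact ⟨hG, hcard, himage.trans hcard⟩

theorem mem_signedSets_of_subset {A : Finset α} {B : Finset β} {r : ℕ} {G H : Finset (α × β)}
    (hG : G ∈ signedSets A B r) (hHG : H ⊆ G) : H ∈ signedSets A B H.card := by
  obtain ⟨hGAB, -, hGinj⟩ := mem_signedSets.1 hG
  exact mem_signedSets.2 ⟨hHG.trans hGAB, rfl, hGinj.mono hHG⟩

theorem card_signedSets_filter_image_fst_eq [DecidableEq β] {A S : Finset α} (B : Finset β)
    (hSA : S ⊆ A) :
    #{G ∈ signedSets A B S.card | G.image Prod.fst = S} = B.card ^ S.card := by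
  let graph : (S → β) → Finset (α × β) := fun g => univ.image fun x => (x.1, g x)
  have mem_graph {g : S → β} {p : α × β} : p ∈ graph g ↔ ∃ x : S, (x.1, g x) = p := by
    simp [graph]
  have graph_injective : Function.Injective graph := by
    intro g₁ g₂ hg
    funext x
    obtain ⟨y, hy⟩ := mem_graph.1 (hg ▸ mem_graph.2 ⟨x, rfl⟩ : (x.1, g₁ x) ∈ graph g₂)
    obtain ⟨hxy, hgy⟩ := Prod.ext_iff.1 hy
    rw [Subtype.ext hxy] at hgy
    exact hgy.symm
  have card_graph (g : S → β) : (graph g).card = S.card := by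
    rw [card_image_of_injective _ fun x y hxy => Subtype.ext (congrArg Prod.fst hxy), card_univ,
      Fintype.card_coe]
  have image_fst_graph (g : S → β) : (graph g).image Prod.fst = S := by
    ext a
    simp [graph]
  rw [show B.card ^ S.card = #(Fintype.piFinset fun _ : S => B) by simp]
  symm
  refine card_nbij graph (fun g hg => ?_) graph_injective.injOn (fun G hG => ?_)
  · rw [mem_coe, Fintype.mem_piFinset] at hg
    refine mem_filter.2 ⟨mem_signedSets.2 ⟨fun p hp => ?_, card_graph g, ?_⟩, image_fst_graph g⟩
    · obtain ⟨x, rfl⟩ := mem_graph.1 hp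
      exact mem_product.2 ⟨hSA x.2, hg x⟩
    · rw [← card_image_iff, image_fst_graph, card_graph]
  · obtain ⟨hG, hGS⟩ := mem_filter.1 hG
    obtain ⟨hGAB, hGcard, -⟩ := mem_signedSets.1 hG
    have hfiber (x : S) : ∃ y, (x.1, y) ∈ G := by
      obtain ⟨p, hp, hpx⟩ := mem_image.1 (hGS ▸ x.2 : x.1 ∈ G.image Prod.fst)
      exact ⟨p.2, hpx ▸ hp⟩
    choose g hg using hfiber
    refine ⟨g, Fintype.mem_piFinset.2 fun x => (mem_product.1 (hGAB (hg x))).2, ?_⟩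
    have hsub : graph g ⊆ G := fun p hp => by
      obtain ⟨x, rfl⟩ := mem_graph.1 hp
      exact hg x
    exact eq_of_subset_of_card_le hsub (hGcard.trans (card_graph g).symm).le

theorem card_signedSets [DecidableEq β] (A : Finset α) (B : Finset β) (r : ℕ) :
    #(signedSets A B r) = A.card.choose r * B.card ^ r := by
  have hmaps : ∀ G ∈ signedSets A B r, G.image Prod.fst ∈ A.powersetCard r := by
    intro G hG
    obtain ⟨hGAB, hGcard, hinj⟩ := mem_signedSets.1 hG
    refine mem_powersetCard.2 ⟨fun x hx => ?_, (card_image_of_injOn hinj).trans hGcard⟩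
    obtain ⟨p, hp, rfl⟩ := mem_image.1 hx
    exact (mem_product.1 (hGAB hp)).1
  rw [card_eq_sum_card_fiberwise hmaps, ← card_powersetCard, ← smul_eq_mul, ← sum_const]
  refine sum_congr rfl fun S hS => ?_
  obtain ⟨hSA, rfl⟩ := mem_powersetCard.1 hS
  exact card_signedSets_filter_image_fst_eq B hSA

theorem card_filter_superset_signedSets_eq [DecidableEq β] {A : Finset α} {B : Finset β}
    {I : Finset (α × β)} {s r : ℕ} (hI : I ∈ signedSets A B s) (hsr : s ≤ r) :
    #{F ∈ signedSets A B r | I ⊆ F} = #(signedSets (A \ I.image Prod.fst) B (r - s)) := by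
  obtain ⟨hIAB, hIcard, hIinj⟩ := mem_signedSets.1 hI
  have fst_notMem {G : Finset (α × β)} (hG : G ∈ signedSets (A \ I.image Prod.fst) B (r - s))
      {p : α × β} (hp : p ∈ G) : p.1 ∉ I.image Prod.fst :=
    (mem_sdiff.1 (mem_product.1 ((mem_signedSets.1 hG).1 hp)).1).2
  have disjoint_of_mem {G : Finset (α × β)}
      (hG : G ∈ signedSets (A \ I.image Prod.fst) B (r - s)) : Disjoint G I :=
    disjoint_left.2 fun p hpG hpI => fst_notMem hG hpG (mem_image_of_mem _ hpI)
  refine card_nbij' (· \ I) (· ∪ I) (fun F hF => ?_) (fun G hG => ?_) (fun F hF => ?_)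
    (fun G hG => union_sdiff_cancel_right (disjoint_of_mem hG))
  · obtain ⟨hF, hIF⟩ := mem_filter.1 hF
    obtain ⟨hFAB, hFcard, hFinj⟩ := mem_signedSets.1 hF
    refine mem_signedSets.2 ⟨fun p hp => ?_, by rw [card_sdiff_of_subset hIF, hFcard, hIcard],
      hFinj.mono (by simp)⟩
    obtain ⟨hpF, hpI⟩ := mem_sdiff.1 hp
    refine mem_product.2 ⟨mem_sdiff.2 ⟨(mem_product.1 (hFAB hpF)).1, fun hpIfst => ?_⟩,
      (mem_product.1 (hFAB hpF)).2⟩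
    obtain ⟨q, hqI, hqp⟩ := mem_image.1 hpIfst
    exact hpI (hFinj (mem_coe.2 (hIF hqI)) (mem_coe.2 hpF) hqp ▸ hqI)
  · obtain ⟨hGAB, hGcard, hGinj⟩ := mem_signedSets.1 hG
    refine mem_filter.2 ⟨mem_signedSets.2 ⟨union_subset (hGAB.trans ?_) hIAB, ?_, ?_⟩,
      subset_union_right⟩
    · exact product_subset_product_left sdiff_subset
    · rw [card_union_of_disjoint (disjoint_of_mem hG), hGcard, hIcard, Nat.sub_add_cancel hsr]
    · rw [coe_union, Set.injOn_union (disjoint_coe.2 (disjoint_of_mem hG))]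
      exact ⟨hGinj, hIinj, fun p hp q hq hpq =>
        fst_notMem hG hp (hpq ▸ mem_image_of_mem _ hq)⟩
  · exact sdiff_union_of_subset (mem_filter.1 hF).2

theorem card_filter_superset_signedSets [DecidableEq β] {A : Finset α} {B : Finset β}
    {I : Finset (α × β)} {s r : ℕ} (hI : I ∈ signedSets A B s) (hsr : s ≤ r) :
    #{F ∈ signedSets A B r | I ⊆ F} = (A.card - s).choose (r - s) * B.card ^ (r - s) := by
  obtain ⟨hIAB, hIcard, hIinj⟩ := mem_signedSets.1 hI
  have hfst : I.image Prod.fst ⊆ A := fun x hx => by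
    obtain ⟨p, hp, rfl⟩ := mem_image.1 hx
    exact (mem_product.1 (hIAB hp)).1
  rw [card_filter_superset_signedSets_eq hI hsr, card_signedSets, card_sdiff_of_subset hfst,
    card_image_of_injOn hIinj, hIcard]

end SignedSets

theorem card_inter_eq_card_add_card_sdiff_inter {α : Type*} [DecidableEq α] {A B F : Finset α}
    (hBA : B ⊆ A) (hBF : B ⊆ F) : #(F ∩ A) = #B + #((A \ B) ∩ F) := by
  rw [show (A \ B) ∩ F = (F ∩ A) \ B by grind, add_comm,
    card_sdiff_add_card_eq_card (subset_inter hBF hBA)]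

theorem L_eq_signedSets (n r k : ℕ) : L n r k = signedSets (Icc 1 n) (Icc 1 k) r := rfl

theorem card_Msig (d : ℕ) : #(Msig d) = d := by
  rw [Msig, card_image_of_injective _ fun x y h => congrArg Prod.fst h, Nat.card_Icc,
    Nat.add_sub_cancel]

theorem Msig_subset_Msig {t a : ℕ} (h : t ≤ a) : Msig t ⊆ Msig a :=
  image_subset_image (Icc_subset_Icc_right h)

theorem Msig_mem_L {d n k : ℕ} (hdn : d ≤ n) (hk : 1 ≤ k) : Msig d ∈ L n d k := by
  rw [L_eq_signedSets, mem_signedSets, card_Msig]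
  refine ⟨fun p hp => ?_, rfl, fun p hp q hq hpq => ?_⟩
  · obtain ⟨x, hx, rfl⟩ := mem_image.1 hp
    exact mem_product.2 ⟨Icc_subset_Icc_right hdn hx, mem_Icc.2 ⟨le_rfl, hk⟩⟩
  · obtain ⟨x, -, rfl⟩ := mem_image.1 hp
    obtain ⟨y, -, rfl⟩ := mem_image.1 hq
    simp_all

theorem card_filter_L_Msig_subset_mem {n r k t a : ℕ} {p : ℕ × ℕ} (hp : p ∈ Msig a \ Msig t)
    (hta : t ≤ a) (han : a ≤ n) (hk : 1 ≤ k) (htr : t + 1 ≤ r) :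
    #{F ∈ L n r k | Msig t ⊆ F ∧ p ∈ F} = (n - t - 1).choose (r - t - 1) * k ^ (r - t - 1) := by
  obtain ⟨hpa, hpt⟩ := mem_sdiff.1 hp
  have hI : insert p (Msig t) ∈ L n (t + 1) k := by
    have := mem_signedSets_of_subset (Msig_mem_L han hk) (insert_subset hpa (Msig_subset_Msig hta))
    rwa [card_insert_of_notMem hpt, card_Msig] at this
  rw [filter_congr fun F _ => (insert_subset_iff.trans and_comm).symm, L_eq_signedSets,
    card_filter_superset_signedSets hI htr, Nat.card_Icc, Nat.card_Icc, Nat.add_sub_cancel,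
    Nat.add_sub_cancel, Nat.sub_sub, Nat.sub_sub]

theorem double_count_first_general (n r k t a : ℕ) (hk : 2 ≤ k) (htr : t + 1 ≤ r) (hta : t + 1 ≤ a)
    (han : a ≤ n) :
    ∑ i ∈ Finset.Icc 1 (a - t),
        i * ((L n r k).filter (fun F => Msig t ⊆ F ∧ (F ∩ Msig a).card = t + i)).card =
      (a - t) * (n - t - 1).choose (r - t - 1) * k ^ (r - t - 1) := by
  set E := {F ∈ L n r k | Msig t ⊆ F}
  set D := Msig a \ Msig t
  have hMta : Msig t ⊆ Msig a := Msig_subset_Msig (by omega)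
  have hcardD : #D = a - t := by rw [card_sdiff_of_subset hMta, card_Msig, card_Msig]
  have hfilter (i : ℕ) :
      {F ∈ L n r k | Msig t ⊆ F ∧ #(F ∩ Msig a) = t + i} = {F ∈ E | #(D ∩ F) = i} := by
    rw [filter_filter]
    refine filter_congr fun F _ => and_congr_right fun hF => ?_
    rw [card_inter_eq_card_add_card_sdiff_inter hMta hF, card_Msig]
    exact Nat.add_left_cancel_iff
  have hdegree :
      ∀ p ∈ D, #{F ∈ E | p ∈ F} = (n - t - 1).choose (r - t - 1) * k ^ (r - t - 1) :=
    fun p hp => by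
      rw [filter_filter]
      exact card_filter_L_Msig_subset_mem hp (by omega) han (by omega) htr
  calc _ = ∑ i ∈ Icc 1 (a - t), i * #{F ∈ E | #(D ∩ F) = i} := by simp_rw [hfilter]
    _ = ∑ F ∈ E, #(D ∩ F) :=
      sum_mul_card_filter_eq_sum fun F _ => hcardD ▸ card_le_card inter_subset_left
    _ = #D * ((n - t - 1).choose (r - t - 1) * k ^ (r - t - 1)) := sum_card_inter hdegree
    _ = _ := by rw [hcardD, mul_assoc]

theorem double_count_first (n r k t a : ℕ) (hn : 0 < n) (ht : 0 < t)
    (hk : 2 ≤ k) (htr : t + 1 ≤ r) (hrn : r ≤ n) (hta : t + 1 ≤ a) (han : a ≤ n) :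
    ∑ i ∈ Finset.Icc 1 (a - t),
        i * ((L n r k).filter (fun F => Msig t ⊆ F ∧ (F ∩ Msig a).card = t + i)).card =
      (a - t) * (n - t - 1).choose (r - t - 1) * k ^ (r - t - 1) :=
  double_count_first_general n r k t a hk htr hta han
end

section
/- Let $n,r,k,t$ be positive integers with $n\ge r\ge t+1$ and $k\ge2$. Suppose $\mathcal{F}\subset\mathcal{L}_{n,r,k}$ is a maximal $t$-intersecting family with $\tau_t(\mathcal{F})=t+1$ that has exactly one $t$-cover of size $t+1$. Then $|\mathcal{F}|\le\binom{n-t-1}{r-t-1}k^{r-t-1}+(t+1)(r-t)^2\binom{n-t-2}{r-t-2}k^{r-t-2}$. -/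
open Finset

attribute [local instance] Classical.propDecidable

lemma graph_fiber_card (B : Finset ℕ) (k : ℕ) (Q : Finset (Finset (ℕ × ℕ)))
    (hQ : ∀ U ∈ Q, U ⊆ B ×ˢ Finset.Icc 1 k ∧ U.card = B.card ∧ U.image Prod.fst = B) :
    Q.card ≤ k ^ B.card := by
  classical
  have key : ∀ U ∈ Q, ∀ a ∈ B, ∃ p, p ∈ U ∧ p.1 = a ∧ ∀ q ∈ U, q.1 = a → q = p := by
    intro U hU a ha
    obtain ⟨hsub, hcard, himg⟩ := hQ U hU
    have hinj : Set.InjOn Prod.fst (U : Set (ℕ × ℕ)) := by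
      apply Finset.card_image_iff.mp; rw [himg, hcard]
    obtain ⟨p, hpU, hp1⟩ := Finset.mem_image.mp (himg ▸ ha)
    exact ⟨p, hpU, hp1, fun q hq hq1 => hinj hq hpU (by rw [hq1, hp1])⟩
  set g : Finset (ℕ × ℕ) → (∀ a ∈ B, ℕ) :=
    fun U => fun a _ => (U.filter (fun p => p.1 = a)).sum Prod.snd with hg
  have hval : ∀ U ∈ Q, ∀ a (ha : a ∈ B), ∀ p, p ∈ U → p.1 = a → g U a ha = p.2 := by
    intro U hU a ha p hpU hp1
    obtain ⟨p', hp'U, hp'1, huniq⟩ := key U hU a ha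
    have hpp' : p = p' := huniq p hpU hp1
    have : U.filter (fun q => q.1 = a) = {p} := by
      ext q
      simp only [Finset.mem_filter, Finset.mem_singleton]
      constructor
      · rintro ⟨hqU, hq1⟩; rw [huniq q hqU hq1, hpp']
      · rintro rfl; exact ⟨hpU, hp1⟩
    rw [hg]; simp only [this, Finset.sum_singleton]
  have hmaps : ∀ U ∈ Q, g U ∈ B.pi (fun _ => Finset.Icc 1 k) := by
    intro U hU
    rw [Finset.mem_pi]
    intro a ha
    obtain ⟨p, hpU, hp1, _⟩ := key U hU a ha
    rw [hval U hU a ha p hpU hp1]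
    exact (Finset.mem_product.mp ((hQ U hU).1 hpU)).2
  have hsubs : ∀ U1 ∈ Q, ∀ U2 ∈ Q, g U1 = g U2 → U1 ⊆ U2 := by
    intro U1 h1 U2 h2 heq p hp
    have ha : p.1 ∈ B := by
      rw [← (hQ U1 h1).2.2]; exact Finset.mem_image_of_mem _ hp
    obtain ⟨p', hp'U, hp'1, _⟩ := key U2 h2 p.1 ha
    have e1 : g U1 p.1 ha = p.2 := hval U1 h1 p.1 ha p hp rfl
    have e2 : g U2 p.1 ha = p'.2 := hval U2 h2 p.1 ha p' hp'U hp'1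
    have hpe : p = p' := by
      have h2' : p.2 = p'.2 := by rw [← e1, ← e2, heq]
      exact Prod.ext hp'1.symm h2'
    rw [hpe]; exact hp'U
  have hinjQ : Set.InjOn g (Q : Set (Finset (ℕ × ℕ))) := by
    intro U1 h1 U2 h2 heq
    exact Finset.Subset.antisymm (hsubs U1 h1 U2 h2 heq) (hsubs U2 h2 U1 h1 heq.symm)
  calc Q.card ≤ (B.pi (fun _ => Finset.Icc 1 k)).card :=
        Finset.card_le_card_of_injOn g hmaps hinjQ
    _ = k ^ B.card := by
        rw [Finset.card_pi]
        simp [Nat.card_Icc]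

lemma count_signed (S : Finset ℕ) (k m : ℕ) (P : Finset (Finset (ℕ × ℕ)))
    (hP : ∀ U ∈ P, U ⊆ S ×ˢ Finset.Icc 1 k ∧ U.card = m ∧ (U.image Prod.fst).card = m) :
    P.card ≤ S.card.choose m * k ^ m := by
  classical
  have h1 : P.card ≤ k ^ m * (P.image (fun U => U.image Prod.fst)).card := by
    apply Finset.card_le_mul_card_image
    intro B hB
    obtain ⟨U0, hU0P, hU0B⟩ := Finset.mem_image.mp hB
    have hBcard : B.card = m := by rw [← hU0B]; exact (hP U0 hU0P).2.2
    have := graph_fiber_card B k (P.filter (fun U => U.image Prod.fst = B)) ?_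
    · rw [hBcard] at this; exact this
    · intro U hU
      obtain ⟨hUP, hUB⟩ := Finset.mem_filter.mp hU
      obtain ⟨hsub, hcard, himg⟩ := hP U hUP
      refine ⟨?_, by rw [hcard, hBcard], hUB⟩
      intro p hp
      rw [Finset.mem_product]
      refine ⟨?_, (Finset.mem_product.mp (hsub hp)).2⟩
      rw [← hUB]; exact Finset.mem_image_of_mem _ hp
  have h2 : (P.image (fun U => U.image Prod.fst)).card ≤ S.card.choose m := by
    rw [← Finset.card_powersetCard m S]
    apply Finset.card_le_card
    intro B hB
    obtain ⟨U, hUP, hUB⟩ := Finset.mem_image.mp hB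
    rw [Finset.mem_powersetCard]
    obtain ⟨hsub, hcard, himg⟩ := hP U hUP
    constructor
    · rw [← hUB]
      intro a ha
      obtain ⟨p, hpU, hp1⟩ := Finset.mem_image.mp ha
      rw [← hp1]; exact (Finset.mem_product.mp (hsub hpU)).1
    · rw [← hUB]; exact himg
  calc P.card ≤ k ^ m * (P.image (fun U => U.image Prod.fst)).card := h1
    _ ≤ k ^ m * S.card.choose m := Nat.mul_le_mul_left _ h2
    _ = S.card.choose m * k ^ m := Nat.mul_comm _ _

lemma sup_count (n r k : ℕ) (base : Finset (ℕ × ℕ)) (G : Finset (Finset (ℕ × ℕ)))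
    (hG : G ⊆ L n r k) (hbase : ∀ A ∈ G, base ⊆ A) :
    G.card ≤ (n - base.card).choose (r - base.card) * k ^ (r - base.card) := by
  classical
  rcases G.eq_empty_or_nonempty with h | ⟨A0, hA0⟩
  · simp [h]
  have hmemL : ∀ A ∈ G, A ⊆ box n k ∧ A.card = r ∧ (A.image Prod.fst).card = r := by
    intro A hA
    have := hG hA
    simp only [L, Finset.mem_filter, Finset.mem_powerset] at this
    exact ⟨this.1, this.2.1, this.2.2⟩
  obtain ⟨hA0box, hA0card, hA0img⟩ := hmemL A0 hA0
  have hA0inj : Set.InjOn Prod.fst (A0 : Set (ℕ × ℕ)) :=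
    Finset.card_image_iff.mp (by rw [hA0img, hA0card])
  have hbA0 := hbase A0 hA0
  have hbimg : (base.image Prod.fst).card = base.card :=
    Finset.card_image_iff.mpr (hA0inj.mono (by exact_mod_cast hbA0))
  set S : Finset ℕ := Finset.Icc 1 n \ base.image Prod.fst with hS
  have hScard : S.card = n - base.card := by
    rw [hS, Finset.card_sdiff_of_subset, Nat.card_Icc, hbimg]
    · omega
    · intro a ha
      obtain ⟨p, hpb, hp1⟩ := Finset.mem_image.mp ha
      rw [← hp1]
      exact (Finset.mem_product.mp (hA0box (hbA0 hpb))).1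
  have hinj : Set.InjOn (fun A => A \ base) (G : Set (Finset (ℕ × ℕ))) := by
    intro A1 h1 A2 h2 heq
    simp only at heq
    rw [← Finset.sdiff_union_of_subset (hbase A1 h1), ← Finset.sdiff_union_of_subset (hbase A2 h2), heq]
  have hcardeq : G.card = (G.image (fun A => A \ base)).card :=
    (Finset.card_image_of_injOn hinj).symm
  rw [hcardeq, ← hScard]
  apply count_signed
  intro V hV
  obtain ⟨A, hAG, hAV⟩ := Finset.mem_image.mp hV
  obtain ⟨hAbox, hAcard, hAimg⟩ := hmemL A hAG
  have hAinj : Set.InjOn Prod.fst (A : Set (ℕ × ℕ)) :=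
    Finset.card_image_iff.mp (by rw [hAimg, hAcard])
  have hbA := hbase A hAG
  refine ⟨?_, ?_, ?_⟩
  · rw [← hAV]
    intro p hp
    obtain ⟨hpA, hpb⟩ := Finset.mem_sdiff.mp hp
    rw [Finset.mem_product, hS]
    refine ⟨Finset.mem_sdiff.mpr ⟨(Finset.mem_product.mp (hAbox hpA)).1, ?_⟩,
      (Finset.mem_product.mp (hAbox hpA)).2⟩
    intro hmem
    obtain ⟨q, hqb, hq1⟩ := Finset.mem_image.mp hmem
    have : q = p := hAinj (hbA hqb) hpA hq1
    exact hpb (this ▸ hqb)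
  · rw [← hAV, Finset.card_sdiff_of_subset hbA, hAcard]
  · rw [← hAV]
    have : Set.InjOn Prod.fst ((A \ base : Finset (ℕ × ℕ)) : Set (ℕ × ℕ)) :=
      hAinj.mono (by exact_mod_cast Finset.sdiff_subset)
    rw [Finset.card_image_iff.mpr this, Finset.card_sdiff_of_subset hbA, hAcard]

theorem bound_unique_cover (n r k t : ℕ) (hn : 0 < n) (ht : 0 < t)
    (hk : 2 ≤ k) (htr : t + 1 ≤ r) (hrn : r ≤ n)
    (F : Finset (Finset (ℕ × ℕ))) (hF : IsMaximalTIntersecting n r k t F)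
    (hmin : ∀ T, IsTCover n k t F T → t + 1 ≤ T.card)
    (huniq : ∃! T, IsTCover n k t F T ∧ T.card = t + 1) :
    F.card ≤ (n - t - 1).choose (r - t - 1) * k ^ (r - t - 1) +
      (t + 1) * (r - t) ^ 2 * (n - t - 2).choose (r - t - 2) * k ^ (r - t - 2) := by
  classical
  obtain ⟨T, ⟨hTcov, hTcard⟩, hTuniq⟩ := huniq
  obtain ⟨hFsub, hFint, -⟩ := hF
  obtain ⟨⟨hTbox, hTsig⟩, hTmeet⟩ := hTcov
  have hTinj : Set.InjOn Prod.fst (T : Set (ℕ × ℕ)) := Finset.card_image_iff.mp hTsig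
  have hmemL : ∀ A ∈ F, A ⊆ box n k ∧ A.card = r ∧ (A.image Prod.fst).card = r := by
    intro A hA
    have := hFsub hA
    simp only [L, Finset.mem_filter, Finset.mem_powerset] at this
    exact ⟨this.1, this.2.1, this.2.2⟩
  set c1 := (n - t - 1).choose (r - t - 1) * k ^ (r - t - 1) with hc1
  set c2 := (n - t - 2).choose (r - t - 2) * k ^ (r - t - 2) with hc2
  set F0 := F.filter (fun B => T ⊆ B) with hF0
  set Fx : ℕ × ℕ → Finset (Finset (ℕ × ℕ)) :=
    fun x => F.filter (fun B => T ∩ B = T.erase x) with hFxdef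
  have hsplit : F ⊆ F0 ∪ T.biUnion Fx := by
    intro B hB
    by_cases hTB : T ⊆ B
    · exact mem_union_left _ (mem_filter.mpr ⟨hB, hTB⟩)
    · obtain ⟨x, hxT, hxB⟩ : ∃ x ∈ T, x ∉ B := by
        by_contra h
        push_neg at h
        exact hTB fun p hp => h p hp
      refine mem_union_right _ (mem_biUnion.mpr ⟨x, hxT, mem_filter.mpr ⟨hB, ?_⟩⟩)
      apply Finset.eq_of_subset_of_card_le
      · intro p hp
        obtain ⟨hpT, hpB⟩ := mem_inter.mp hp
        exact mem_erase.mpr ⟨fun h => hxB (h ▸ hpB), hpT⟩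
      · have h1 := hTmeet B hB
        rw [card_erase_of_mem hxT, hTcard]
        omega
  have hF0bound : F0.card ≤ c1 := by
    have := sup_count n r k T F0 ((filter_subset _ _).trans hFsub)
      (fun A hA => (mem_filter.mp hA).2)
    rwa [hTcard, show n - (t + 1) = n - t - 1 from by omega,
      show r - (t + 1) = r - t - 1 from by omega] at this
  have hxbound : ∀ x ∈ T, (Fx x).card ≤ (r - t) * ((r - t) * c2) := by
    intro x hxT
    have hTebox : T.erase x ⊆ box n k := (erase_subset _ _).trans hTbox
    have hTeinj : Set.InjOn Prod.fst ((T.erase x : Finset (ℕ × ℕ)) : Set (ℕ × ℕ)) :=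
      hTinj.mono (by exact_mod_cast erase_subset x T)
    have hTesig : (T.erase x).card = t := by rw [card_erase_of_mem hxT, hTcard]; omega
    have hTeimg : ((T.erase x).image Prod.fst).card = (T.erase x).card :=
      Finset.card_image_iff.mpr hTeinj
    have hnc : ¬ IsTCover n k t F (T.erase x) := by
      intro hc
      have := hmin _ hc
      omega
    have hA : ∃ A ∈ F, (T.erase x ∩ A).card < t := by
      by_contra h
      push_neg at h
      exact hnc ⟨⟨hTebox, hTeimg⟩, h⟩
    obtain ⟨A, hAF, hAsmall⟩ := hA
    obtain ⟨hAbox, hAcard, hAimg⟩ := hmemL A hAF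
    have hCex : ∀ z, z ∈ A \ T → z.1 ∉ (T.erase x).image Prod.fst →
        ∃ C, C ∈ F ∧ (insert z (T.erase x) ∩ C).card < t := by
      intro z hz hzfst
      have hzA : z ∈ A := (mem_sdiff.mp hz).1
      have hzT : z ∉ T := (mem_sdiff.mp hz).2
      have hzTe : z ∉ T.erase x := fun h => hzT (erase_subset _ _ h)
      have hT'card : (insert z (T.erase x)).card = t + 1 := by
        rw [card_insert_of_notMem hzTe, hTesig]
      have hT'sig : IsSigned n k (insert z (T.erase x)) := by
        refine ⟨insert_subset (hAbox hzA) hTebox, ?_⟩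
        rw [image_insert, card_insert_of_notMem hzfst, hTeimg, card_insert_of_notMem hzTe]
      by_contra h
      push_neg at h
      have hcov : IsTCover n k t F (insert z (T.erase x)) := ⟨hT'sig, fun C hC => h C hC⟩
      have heq := hTuniq _ ⟨hcov, hT'card⟩
      rw [← heq] at hzT
      exact hzT (mem_insert_self _ _)
    choose! C hCF hCsmall using hCex
    set Z := (A \ T).filter (fun z => z.1 ∉ (T.erase x).image Prod.fst) with hZ
    have hFxsub : Fx x ⊆ Z.biUnion (fun z => (C z \ insert z T).biUnion
        (fun w => F.filter (fun B => insert z (insert w (T.erase x)) ⊆ B))) := by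
      intro B hB
      obtain ⟨hBF, hBcap⟩ := mem_filter.mp hB
      obtain ⟨hBbox, hBcard, hBimg⟩ := hmemL B hBF
      have hBinj : Set.InjOn Prod.fst (B : Set (ℕ × ℕ)) :=
        Finset.card_image_iff.mp (by rw [hBimg, hBcard])
      have hxB : x ∉ B := by
        intro h
        have hx2 : x ∈ T ∩ B := mem_inter.mpr ⟨hxT, h⟩
        rw [hBcap] at hx2
        exact (mem_erase.mp hx2).1 rfl
      have hTeB : T.erase x ⊆ B := by
        rw [← hBcap]; exact inter_subset_right
      have hBA : t ≤ (B ∩ A).card := hFint B hBF A hAF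
      have hz : ∃ z, z ∈ B ∧ z ∈ A \ T := by
        by_contra h
        push_neg at h
        have hsub : B ∩ A ⊆ T.erase x ∩ A := by
          intro p hp
          obtain ⟨hpB, hpA⟩ := mem_inter.mp hp
          have hpT : p ∈ T := by
            by_contra hpT
            exact h p hpB (mem_sdiff.mpr ⟨hpA, hpT⟩)
          have hpTB : p ∈ T ∩ B := mem_inter.mpr ⟨hpT, hpB⟩
          rw [hBcap] at hpTB
          exact mem_inter.mpr ⟨hpTB, hpA⟩
        have h4 := card_le_card hsub
        have h5 : (T.erase x ∩ A).card ≤ (A ∩ T.erase x).card := by rw [inter_comm]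
        omega
      obtain ⟨z, hzB, hzAT⟩ := hz
      have hzT : z ∉ T := (mem_sdiff.mp hzAT).2
      have hgood : z.1 ∉ (T.erase x).image Prod.fst := by
        intro hmem
        obtain ⟨q, hqTe, hq1⟩ := mem_image.mp hmem
        have hqB : q ∈ B := hTeB hqTe
        have hqz : q = z := hBinj hqB hzB hq1
        exact hzT (erase_subset _ _ (hqz ▸ hqTe))
      have hzZ : z ∈ Z := mem_filter.mpr ⟨hzAT, hgood⟩
      have hCzF : C z ∈ F := hCF z hzAT hgood
      have hCzsmall : (insert z (T.erase x) ∩ C z).card < t := hCsmall z hzAT hgood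
      have hBC : t ≤ (B ∩ C z).card := hFint B hBF (C z) hCzF
      have hw : ∃ w, w ∈ B ∧ w ∈ C z ∧ w ∉ insert z (T.erase x) := by
        by_contra h
        push_neg at h
        have hsub : B ∩ C z ⊆ insert z (T.erase x) ∩ C z := by
          intro p hp
          obtain ⟨hpB, hpC⟩ := mem_inter.mp hp
          exact mem_inter.mpr ⟨h p hpB hpC, hpC⟩
        have h4 := card_le_card hsub
        omega
      obtain ⟨w, hwB, hwC, hwT'⟩ := hw
      have hwW : w ∈ C z \ insert z T := by
        rw [mem_sdiff, mem_insert]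
        refine ⟨hwC, ?_⟩
        rintro (h | hwT)
        · exact hwT' (h ▸ mem_insert_self _ _)
        · have hwx : w ≠ x := fun h => hxB (h ▸ hwB)
          exact hwT' (mem_insert_of_mem (mem_erase.mpr ⟨hwx, hwT⟩))
      refine mem_biUnion.mpr ⟨z, hzZ, mem_biUnion.mpr ⟨w, hwW, mem_filter.mpr ⟨hBF, ?_⟩⟩⟩
      intro p hp
      rcases mem_insert.mp hp with rfl | hp2
      · exact hzB
      rcases mem_insert.mp hp2 with rfl | hp3
      · exact hwB
      · exact hTeB hp3
    have hinner : ∀ z ∈ Z, ∀ w ∈ C z \ insert z T,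
        (F.filter (fun B => insert z (insert w (T.erase x)) ⊆ B)).card ≤ c2 := by
      intro z hzZ w hwW
      obtain ⟨hzAT, hgood⟩ := mem_filter.mp hzZ
      have hzT : z ∉ T := (mem_sdiff.mp hzAT).2
      obtain ⟨hwC, hwzT⟩ := mem_sdiff.mp hwW
      rw [mem_insert] at hwzT
      push_neg at hwzT
      obtain ⟨hwz, hwT⟩ := hwzT
      have hbcard : (insert z (insert w (T.erase x))).card = t + 2 := by
        rw [card_insert_of_notMem, card_insert_of_notMem, hTesig]
        · exact fun h => hwT (erase_subset _ _ h)
        · rw [mem_insert]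
          push_neg
          exact ⟨fun h => hwz h.symm, fun h => hzT (erase_subset _ _ h)⟩
      have := sup_count n r k (insert z (insert w (T.erase x))) _
        ((filter_subset _ _).trans hFsub) (fun A' hA' => (mem_filter.mp hA').2)
      rwa [hbcard, show n - (t + 2) = n - t - 2 from by omega,
        show r - (t + 2) = r - t - 2 from by omega] at this
    have hWcard : ∀ z ∈ Z, (C z \ insert z T).card ≤ r - t := by
      intro z hzZ
      obtain ⟨hzAT, hgood⟩ := mem_filter.mp hzZ
      have hCzF : C z ∈ F := hCF z hzAT hgood
      have hCr : (C z).card = r := (hmemL _ hCzF).2.1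
      have hCT : t ≤ (T ∩ C z).card := hTmeet (C z) hCzF
      have h1 : (C z \ insert z T).card ≤ (C z \ T).card :=
        card_le_card (sdiff_subset_sdiff (Finset.Subset.refl _) (subset_insert _ _))
      have h2 : (C z \ T).card + (C z ∩ T).card = (C z).card := card_sdiff_add_card_inter _ _
      have h3 : (C z ∩ T).card = (T ∩ C z).card := by rw [inter_comm]
      omega
    have hZcard : Z.card ≤ r - t := by
      have h1 : Z.card ≤ (A \ T).card := card_le_card (filter_subset _ _)
      have h2 : (A \ T).card + (A ∩ T).card = A.card := card_sdiff_add_card_inter _ _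
      have h3 : (A ∩ T).card = (T ∩ A).card := by rw [inter_comm]
      have h4 := hTmeet A hAF
      omega
    calc (Fx x).card
        ≤ (Z.biUnion (fun z => (C z \ insert z T).biUnion
            (fun w => F.filter (fun B => insert z (insert w (T.erase x)) ⊆ B)))).card :=
          card_le_card hFxsub
      _ ≤ ∑ z ∈ Z, ((C z \ insert z T).biUnion
            (fun w => F.filter (fun B => insert z (insert w (T.erase x)) ⊆ B))).card :=
          card_biUnion_le
      _ ≤ ∑ z ∈ Z, (r - t) * c2 := by
          apply Finset.sum_le_sum
          intro z hzZ
          calc ((C z \ insert z T).biUnion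
                (fun w => F.filter (fun B => insert z (insert w (T.erase x)) ⊆ B))).card
              ≤ ∑ w ∈ C z \ insert z T,
                  (F.filter (fun B => insert z (insert w (T.erase x)) ⊆ B)).card :=
                card_biUnion_le
            _ ≤ ∑ w ∈ C z \ insert z T, c2 := Finset.sum_le_sum (hinner z hzZ)
            _ = (C z \ insert z T).card * c2 := by rw [Finset.sum_const, smul_eq_mul]
            _ ≤ (r - t) * c2 := Nat.mul_le_mul_right _ (hWcard z hzZ)
      _ = Z.card * ((r - t) * c2) := by rw [Finset.sum_const, smul_eq_mul]
      _ ≤ (r - t) * ((r - t) * c2) := Nat.mul_le_mul_right _ hZcard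
  have hsum : ∑ x ∈ T, (Fx x).card ≤ (t + 1) * ((r - t) * ((r - t) * c2)) := by
    calc ∑ x ∈ T, (Fx x).card ≤ ∑ _x ∈ T, (r - t) * ((r - t) * c2) :=
          Finset.sum_le_sum hxbound
      _ = T.card * ((r - t) * ((r - t) * c2)) := by rw [Finset.sum_const, smul_eq_mul]
      _ = (t + 1) * ((r - t) * ((r - t) * c2)) := by rw [hTcard]
  calc F.card ≤ (F0 ∪ T.biUnion Fx).card := card_le_card hsplit
    _ ≤ F0.card + (T.biUnion Fx).card := card_union_le _ _
    _ ≤ F0.card + ∑ x ∈ T, (Fx x).card := Nat.add_le_add_left card_biUnion_le _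
    _ ≤ c1 + (t + 1) * ((r - t) * ((r - t) * c2)) := Nat.add_le_add hF0bound hsum
    _ = (n - t - 1).choose (r - t - 1) * k ^ (r - t - 1) +
        (t + 1) * (r - t) ^ 2 * (n - t - 2).choose (r - t - 2) * k ^ (r - t - 2) := by
        rw [hc1, hc2]; ring
end
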